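/- Let f be a nonnegative trigonometric polynomial, not identically zero, with finite-order zeros, and suppose there exists x₀ ∈ [0,2π) with f(x₀) = 0 and f(x₀ + π mod 2π) = 0 (mirror-point zeros). Then for g = 2 no trigonometric polynomial p satisfies both TGM conditions: if p satisfies condition (i) at both zeros x₀ and x₀+π, then p(x₀) = p(x₀+π) = 0, so Σ_{y ∈ Ω_2(x₀)} p²(y) = 0 and condition (ii) fails at x = x₀. -/
import Mathlib


open Complex Filter Topology

noncomputable section

/-- A real-valued function is a trigonometric polynomial: a finite sum `∑_{|j|≤c} a_j e^{ijx}`. -/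
def IsTrigPolyR (f : ℝ → ℝ) : Prop :=
  ∃ (c : ℕ) (a : ℤ → ℂ), ∀ x : ℝ,
    (f x : ℂ) = ∑ j ∈ Finset.Icc (-(c : ℤ)) (c : ℤ), a j * Complex.exp (Complex.I * (j : ℂ) * (x : ℂ))

/-- TGM condition (i): for every zero `x₀` of `f` (in `[0,2π)`), for each `k = 1,…,g−1`,
`lim_{x→x₀} p(x + 2πk/g)² / f(x)` exists finite. -/
def TGMCondOne (f p : ℝ → ℝ) (g : ℕ) : Prop :=
  ∀ x₀ ∈ Set.Ico (0 : ℝ) (2 * Real.pi), f x₀ = 0 →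
    ∀ j : ℕ, 1 ≤ j → j < g →
      ∃ L : ℝ,
        Filter.Tendsto (fun x : ℝ => (p (x + 2 * Real.pi * (j : ℝ) / (g : ℝ)))^2 / f x)
          (nhdsWithin x₀ {x : ℝ | f x ≠ 0}) (nhds L)

/-- TGM condition (ii): `∑_{y ∈ Ω_g(x)} p(y)² > 0` for all `x ∈ [0,2π)`. -/
def TGMCondTwo (p : ℝ → ℝ) (g : ℕ) : Prop :=
  ∀ x ∈ Set.Ico (0 : ℝ) (2 * Real.pi),
    0 < ∑ j ∈ Finset.range g, (p (x + 2 * Real.pi * (j : ℝ) / (g : ℝ)))^2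

/-- The projected symbol `f̂(x) = (1/g) ∑_{y ∈ Ω_g(x/g)} f(y) |p(y)|²`. -/
def projSymbol (g : ℕ) (f p : ℝ → ℝ) : ℝ → ℝ := fun x =>
  ((g : ℝ))⁻¹ *
    ∑ j ∈ Finset.range g,
      f ((x + 2 * Real.pi * (j : ℝ)) / (g : ℝ)) * (p ((x + 2 * Real.pi * (j : ℝ)) / (g : ℝ)))^2


lemma trig_analyticAt {f : ℝ → ℝ} (hf : IsTrigPolyR f) (x : ℝ) : AnalyticAt ℝ f x := by
  obtain ⟨c, a, ha⟩ := hf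
  have hfe : f = fun y : ℝ =>
      (∑ j ∈ Finset.Icc (-(c : ℤ)) (c : ℤ), a j * Complex.exp (Complex.I * j * y)).re := by
    funext y; rw [← ha y, Complex.ofReal_re]
  rw [hfe]
  apply (Complex.reCLM.analyticAt _).comp
  apply Finset.analyticAt_fun_sum
  intro j _
  exact analyticAt_const.mul
    ((analyticAt_cexp.restrictScalars).comp
      (analyticAt_const.mul (Complex.ofRealCLM.analyticAt x)))

lemma trig_periodic {p : ℝ → ℝ} (hp : IsTrigPolyR p) (x : ℝ) (k : ℤ) :
    p (x + 2 * Real.pi * k) = p x := by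
  obtain ⟨c, a, ha⟩ := hp
  have : ((p (x + 2 * Real.pi * k) : ℝ) : ℂ) = ((p x : ℝ) : ℂ) := by
    rw [ha, ha]
    refine Finset.sum_congr rfl fun j _ => ?_
    congr 1
    rw [show Complex.I * j * ((x + 2 * Real.pi * k : ℝ) : ℂ)
        = Complex.I * j * (x : ℂ) + ((j * k : ℤ) : ℂ) * (2 * (Real.pi : ℂ) * Complex.I) by
      push_cast; ring]
    rw [Complex.exp_add, Complex.exp_int_mul_two_pi_mul_I, mul_one]
  exact_mod_cast this

lemma trig_nebot {f : ℝ → ℝ} (hf : IsTrigPolyR f) (hfne : ∃ x, f x ≠ 0) (x₀ : ℝ) :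
    (nhdsWithin x₀ {x : ℝ | f x ≠ 0}).NeBot := by
  rcases (trig_analyticAt hf x₀).eventually_eq_zero_or_eventually_ne_zero with h | h
  · exfalso
    obtain ⟨x, hx⟩ := hfne
    have hAn : AnalyticOnNhd ℝ f Set.univ := fun y _ => trig_analyticAt hf y
    exact hx (hAn.eqOn_zero_of_preconnected_of_eventuallyEq_zero isPreconnected_univ
      (Set.mem_univ x₀) h (Set.mem_univ x))
  · rw [← mem_closure_iff_nhdsWithin_neBot, mem_closure_iff_frequently]
    exact h.frequently.filter_mono nhdsWithin_le_nhds

lemma limit_forces_zero {f q : ℝ → ℝ} {x₀ : ℝ} (hf0 : ∀ x, 0 ≤ f x)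
    (hfc : ContinuousAt f x₀) (hz : f x₀ = 0) (hqc : ContinuousAt q x₀)
    (hne : (nhdsWithin x₀ {x : ℝ | f x ≠ 0}).NeBot) (L : ℝ)
    (hL : Filter.Tendsto (fun x => (q x) ^ 2 / f x)
      (nhdsWithin x₀ {x : ℝ | f x ≠ 0}) (nhds L)) : q x₀ = 0 := by
  by_contra h
  have hq2 : Filter.Tendsto (fun x => (q x) ^ 2)
      (nhdsWithin x₀ {x : ℝ | f x ≠ 0}) (nhds ((q x₀) ^ 2)) :=
    ((hqc.pow 2).tendsto).mono_left nhdsWithin_le_nhds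
  have hfpos : Filter.Tendsto f (nhdsWithin x₀ {x : ℝ | f x ≠ 0}) (nhdsWithin 0 (Set.Ioi 0)) := by
    rw [tendsto_nhdsWithin_iff]
    constructor
    · simpa [hz] using hfc.tendsto.mono_left nhdsWithin_le_nhds
    · filter_upwards [self_mem_nhdsWithin] with x hx
      exact lt_of_le_of_ne (hf0 x) (Ne.symm hx)
  have hinv : Filter.Tendsto (fun x => (f x)⁻¹)
      (nhdsWithin x₀ {x : ℝ | f x ≠ 0}) Filter.atTop :=
    tendsto_inv_nhdsGT_zero.comp hfpos
  have hpos : (0 : ℝ) < (q x₀) ^ 2 :=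
    lt_of_le_of_ne (sq_nonneg _) (Ne.symm (pow_ne_zero 2 h))
  have htop : Filter.Tendsto (fun x => (q x) ^ 2 * (f x)⁻¹)
      (nhdsWithin x₀ {x : ℝ | f x ≠ 0}) Filter.atTop :=
    hq2.pos_mul_atTop hpos hinv
  simp only [div_eq_mul_inv] at hL
  exact not_tendsto_nhds_of_tendsto_atTop htop L hL

theorem mirror_point_pathology_g_two
    (f : ℝ → ℝ) (hf : IsTrigPolyR f) (hf0 : ∀ x, 0 ≤ f x) (hfne : ∃ x, f x ≠ 0)
    (hford : ∀ x₀ ∈ Set.Ico (0 : ℝ) (2 * Real.pi), f x₀ = 0 →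
      ∃ i : ℕ, ∃ L : ℝ,
        Filter.Tendsto (fun x : ℝ => |x - x₀| ^ (2 * i) / f x)
          (nhdsWithin x₀ {x : ℝ | f x ≠ 0}) (nhds L))
    (x₀ x₁ : ℝ) (hx₀ : x₀ ∈ Set.Ico (0 : ℝ) (2 * Real.pi))
    (hx₁ : x₁ ∈ Set.Ico (0 : ℝ) (2 * Real.pi))
    (hmirror : ∃ m : ℤ, x₁ = x₀ + Real.pi + 2 * Real.pi * (m : ℝ))
    (hz₀ : f x₀ = 0) (hz₁ : f x₁ = 0) :
    ∀ p : ℝ → ℝ, IsTrigPolyR p → TGMCondOne f p 2 →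
      p x₀ = 0 ∧ p (x₀ + Real.pi) = 0 ∧ ¬ TGMCondTwo p 2 := by
  intro p hp hone
  have hshift : 2 * Real.pi * ((1 : ℕ) : ℝ) / ((2 : ℕ) : ℝ) = Real.pi := by push_cast; ring
  have hpc : ∀ y : ℝ, ContinuousAt p y := fun y => (trig_analyticAt hp y).continuousAt
  have hfc : ∀ y : ℝ, ContinuousAt f y := fun y => (trig_analyticAt hf y).continuousAt
  -- zero at x₀ + π, from condition (i) at x₀
  have key : ∀ z : ℝ, z ∈ Set.Ico (0 : ℝ) (2 * Real.pi) → f z = 0 → p (z + Real.pi) = 0 := by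
    intro z hz hfz
    obtain ⟨L, hL⟩ := hone z hz hfz 1 le_rfl (by norm_num)
    rw [hshift] at hL
    have hq : ContinuousAt (fun x : ℝ => p (x + Real.pi)) z := by
      exact ContinuousAt.comp (f := fun x : ℝ => x + Real.pi) (hpc (z + Real.pi)) (by fun_prop)
    exact limit_forces_zero (q := fun x => p (x + Real.pi)) (x₀ := z) hf0 (hfc z) hfz
      hq (trig_nebot hf hfne z) L hL
  have h1 : p (x₀ + Real.pi) = 0 := key x₀ hx₀ hz₀
  have h2 : p (x₁ + Real.pi) = 0 := key x₁ hx₁ hz₁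
  obtain ⟨m, hm⟩ := hmirror
  have h0 : p x₀ = 0 := by
    have : x₁ + Real.pi = x₀ + 2 * Real.pi * ((m + 1 : ℤ) : ℝ) := by push_cast [hm]; ring
    rw [this, trig_periodic hp x₀ (m + 1)] at h2
    exact h2
  refine ⟨h0, h1, fun hT => ?_⟩
  have := hT x₀ hx₀
  rw [Finset.sum_range_succ, Finset.sum_range_succ, Finset.sum_range_zero, hshift] at this
  have hz' : x₀ + 2 * Real.pi * ((0 : ℕ) : ℝ) / ((2 : ℕ) : ℝ) = x₀ := by push_cast; ring
  rw [hz', h0, h1] at this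
  norm_num at this
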